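/- For q = 2 and the quartic extension F_{16} of F_2, there exist nonzero β ∈ F_{16} and γ ∈ F_{16} with F_2(γ) = F_{16} such that neither βγ nor β(γ+1) is a generator of the multiplicative group of F_{16}. -/
import Mathlib

instance : Fact (Nat.Prime 2) := ⟨by norm_num⟩

/-- `q = 2` is not in `L₄`: there exist a nonzero `β ∈ F₁₆` and a generator `γ`
of `F₁₆` over `F₂` such that neither `βγ` nor `β(γ+1)` is a generator of the
multiplicative group of `F₁₆` (which is cyclic of order 15). -/
theorem two_not_in_L4 :
    ∃ β γ : GaloisField 2 4, β ≠ 0 ∧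
      Algebra.adjoin (ZMod 2) {γ} = ⊤ ∧
      orderOf (β * γ) ≠ 15 ∧ orderOf (β * (γ + 1)) ≠ 15 := by
  set F := GaloisField 2 4 with hF
  letI : Fintype F := Fintype.ofFinite F
  have hcardF : Nat.card F = 16 := GaloisField.card 2 4 (by norm_num)
  have hcardU : Nat.card Fˣ = 15 := by
    rw [Nat.card_units, hcardF]
  obtain ⟨g, hg⟩ := IsCyclic.exists_generator (α := Fˣ)
  have hog : orderOf g = 15 := by
    rw [orderOf_eq_card_of_forall_mem_zpowers hg, hcardU]
  set γ : F := ((g ^ 3 : Fˣ) : F) with hγ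
  have h5 : γ ^ 5 = 1 := by
    have : (g ^ 3) ^ 5 = 1 := by
      rw [← pow_mul]
      have : g ^ 15 = 1 := by rw [← hog]; exact pow_orderOf_eq_one g
      simpa using this
    rw [hγ, ← Units.val_pow_eq_pow_val, this, Units.val_one]
  have hγ1 : γ ≠ 1 := by
    intro h
    have : (g ^ 3 : Fˣ) = 1 := Units.ext (by simpa [hγ] using h)
    have h3 : orderOf g ∣ 3 := orderOf_dvd_of_pow_eq_one this
    rw [hog] at h3
    norm_num at h3
  have h2 : (2 : F) = 0 := by
    have := CharP.cast_eq_zero F 2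
    exact_mod_cast this
  have hrel : γ ^ 4 + γ ^ 3 + γ ^ 2 + γ + 1 = 0 := by
    have hne : γ - 1 ≠ 0 := sub_ne_zero.2 hγ1
    have hmul : (γ - 1) * (γ ^ 4 + γ ^ 3 + γ ^ 2 + γ + 1) = 0 := by
      linear_combination h5
    rcases mul_eq_zero.mp hmul with h | h
    · exact absurd h hne
    · exact h
  have hδ3 : (1 + γ) ^ 3 = γ ^ 4 := by
    linear_combination hrel + (γ + γ ^ 2 - γ ^ 4) * h2
  have hδ15 : (1 + γ) ^ 15 = 1 := by
    calc (1 + γ) ^ 15 = ((1 + γ) ^ 3) ^ 5 := by ring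
      _ = (γ ^ 5) ^ 4 := by rw [hδ3]; ring
      _ = 1 := by rw [h5]; ring
  have hδ0 : (1 + γ) ≠ 0 := by
    intro h
    apply hγ1
    linear_combination h - h2
  refine ⟨(1 + γ) ^ 8, γ, pow_ne_zero _ hδ0, ?_, ?_, ?_⟩
  · set A := Algebra.adjoin (ZMod 2) {γ} with hA
    have hmem : γ ∈ A := Algebra.subset_adjoin (Set.mem_singleton γ)
    letI : Fintype A := Fintype.ofFinite A
    letI : DecidableEq A := Classical.decEq A
    letI : Field A := Fintype.fieldOfDomain A
    set x : A := ⟨γ, hmem⟩ with hxdef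
    have hx5 : x ^ 5 = 1 := by
      apply Subtype.ext
      rw [SubmonoidClass.coe_pow, OneMemClass.coe_one]
      exact h5
    have hx1 : x ≠ 1 := by
      intro h
      exact hγ1 (congrArg Subtype.val h)
    have hx0 : x ≠ 0 := by
      intro h
      rw [h, zero_pow (by norm_num : (5:ℕ) ≠ 0)] at hx5
      exact zero_ne_one hx5
    have hox : orderOf x = 5 := by
      have hdvd : orderOf x ∣ 5 := orderOf_dvd_of_pow_eq_one hx5
      rcases (Nat.Prime.eq_one_or_self_of_dvd (by norm_num) _ hdvd) with h | h
      · exact absurd (orderOf_eq_one_iff.mp h) hx1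
      · exact h
    have hpow : x ^ (Fintype.card A - 1) = 1 :=
      FiniteField.pow_card_sub_one_eq_one x hx0
    have h5dvd : 5 ∣ Fintype.card A - 1 := by
      rw [← hox]
      exact orderOf_dvd_of_pow_eq_one hpow
    have hcardA : Fintype.card A = 2 ^ Module.finrank (ZMod 2) A := by
      have := Module.card_eq_pow_finrank (K := ZMod 2) (V := A)
      rwa [ZMod.card] at this
    have hfrF : Module.finrank (ZMod 2) F = 4 := GaloisField.finrank 2 (by norm_num)
    have hle : Module.finrank (ZMod 2) A ≤ 4 := by
      have h1 := Submodule.finrank_le (Subalgebra.toSubmodule A)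
      rwa [Subalgebra.finrank_toSubmodule, hfrF] at h1
    have hpos : 2 ≤ Fintype.card A := Fintype.one_lt_card
    have hd4 : Module.finrank (ZMod 2) A = 4 := by
      set d := Module.finrank (ZMod 2) A with hd
      rw [hcardA] at h5dvd hpos
      interval_cases d <;> omega
    rw [← Algebra.toSubmodule_eq_top]
    apply Submodule.eq_top_of_finrank_eq
    rw [Subalgebra.finrank_toSubmodule, hd4, hfrF]
  · have key : ((1 + γ) ^ 8 * γ) ^ 3 = 1 := by
      calc ((1 + γ) ^ 8 * γ) ^ 3 = (1 + γ) ^ 15 * ((1 + γ) ^ 3) ^ 3 * γ ^ 3 := by ring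
        _ = 1 * (γ ^ 4) ^ 3 * γ ^ 3 := by rw [hδ15, hδ3]
        _ = (γ ^ 5) ^ 3 := by ring
        _ = 1 := by rw [h5]; ring
    intro h
    have := orderOf_dvd_of_pow_eq_one key
    rw [h] at this
    norm_num at this
  · have key : ((1 + γ) ^ 8 * (γ + 1)) ^ 5 = 1 := by
      calc ((1 + γ) ^ 8 * (γ + 1)) ^ 5 = ((1 + γ) ^ 15) ^ 3 := by ring
        _ = 1 := by rw [hδ15]; ring
    intro h
    have := orderOf_dvd_of_pow_eq_one key
    rw [h] at this
    norm_num at this
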